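/- Let g be a compact simple Lie algebra, t a maximal abelian subalgebra, δ = Σ_j m_j α_j the highest root, and σ = Ad(exp(π/2)√−1K_i) with m_i = 3; set h := g^σ. Let τ be an involutive automorphism of g with τ(h) = h and τ(t) = t, and write τ(δ) = Σ_j c_j α_j. Then: (i) τ∘σ = σ∘τ if and only if c_i = 3; (ii) τ∘σ = σ^{−1}∘τ if and only if c_i = −3. -/

import Mathlib

/-!
Common framework: we model the complexification `gC` of a compact Lie algebra `g` as a
complex Lie algebra, the compact real form `g` and the maximal abelian subalgebra `t`
as real Lie subalgebras of `gC`, roots of `(gC, tC)` as complex-linear functionals on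
`gC` (only their restriction to `tC`, the complex span of `t`, matters), and the
inner automorphisms `Ad(exp X) = exp (ad X)` through an abstract family `expAd`
characterized by its action on eigenvectors of `ad X` (which determines it on the
compact form, where every `ad X` is semisimple).
-/

open Complex

namespace Paper

variable (gC : Type) [LieRing gC] [LieAlgebra ℂ gC] [LieAlgebra ℝ gC]
  [IsScalarTower ℝ ℂ gC] [FiniteDimensional ℂ gC]

/-- Composition group structure on the Lie algebra automorphisms of `gC`. -/
noncomputable instance : Group (gC ≃ₗ⁅ℂ⁆ gC) where
  mul f g := g.trans f
  one := LieEquiv.refl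
  inv f := f.symm
  mul_assoc f g h := rfl
  one_mul f := rfl
  mul_one f := rfl
  inv_mul_cancel f := by
    ext x
    exact f.symm_apply_apply x

/-- The complex span `t_ℂ` of a real subalgebra `t` of `gC`. -/
def cspan (t : LieSubalgebra ℝ gC) : Submodule ℂ gC := Submodule.span ℂ (t : Set gC)

/-- The root space of the functional `a` with respect to `t_ℂ`. -/
def rootSpace (t : LieSubalgebra ℝ gC) (a : Module.Dual ℂ gC) : Set gC :=
  {X : gC | ∀ H ∈ cspan gC t, ⁅H, X⁆ = a H • X}

/-- `a` is a root of `(gC, t_ℂ)`. -/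
def IsRoot (t : LieSubalgebra ℝ gC) (a : Module.Dual ℂ gC) : Prop :=
  (∃ H ∈ cspan gC t, a H ≠ 0) ∧ ∃ X : gC, X ≠ 0 ∧ X ∈ rootSpace gC t a

/-- `g` is a compact real form of `gC`: `gC = g ⊕ √-1 g` and the Killing form of `g`
is negative definite. -/
structure IsCompactForm (g : LieSubalgebra ℝ gC) : Prop where
  spans : ∀ z : gC, ∃ x ∈ g, ∃ y ∈ g, z = x + Complex.I • y
  inj : ∀ x : gC, x ∈ g → Complex.I • x ∈ g → x = 0
  negdef : ∀ x : ↥g, x ≠ 0 → killingForm ℝ ↥g x x < 0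

/-- `t` is a maximal abelian subalgebra of `g`. -/
structure IsMaxAbelian (g t : LieSubalgebra ℝ gC) : Prop where
  le : t ≤ g
  abelian : ∀ x ∈ t, ∀ y ∈ t, ⁅x, y⁆ = (0 : gC)
  max : ∀ t' : LieSubalgebra ℝ gC, t' ≤ g →
    (∀ x ∈ t', ∀ y ∈ t', ⁅x, y⁆ = (0 : gC)) → t ≤ t' → t' = t

/-- `α 1, …, α n` is a system of fundamental (simple) roots of `Δ(gC, t_ℂ)` and
`K 1, …, K n` is the dual basis of `t_ℂ`, i.e. `α i (K j) = δ_{ij}`. -/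
structure IsSimpleSystem (t : LieSubalgebra ℝ gC) (n : ℕ) (α : ℕ → Module.Dual ℂ gC)
    (K : ℕ → gC) : Prop where
  isRoot : ∀ i ∈ Finset.Icc 1 n, IsRoot gC t (α i)
  decomp : ∀ b : Module.Dual ℂ gC, IsRoot gC t b →
    (∃ k : ℕ → ℕ, ∀ H ∈ cspan gC t, b H = ∑ j ∈ Finset.Icc 1 n, (k j : ℂ) * α j H) ∨
    (∃ k : ℕ → ℕ, ∀ H ∈ cspan gC t, b H = -∑ j ∈ Finset.Icc 1 n, (k j : ℂ) * α j H)
  K_mem : ∀ j ∈ Finset.Icc 1 n, K j ∈ cspan gC t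
  K_dual : ∀ i ∈ Finset.Icc 1 n, ∀ j ∈ Finset.Icc 1 n, α i (K j) = if i = j then 1 else 0

/-- `δ = Σ m_j α_j` is the highest root of `Δ(gC, t_ℂ)`. -/
structure IsHighestRoot (t : LieSubalgebra ℝ gC) (n : ℕ) (α : ℕ → Module.Dual ℂ gC)
    (δ : Module.Dual ℂ gC) (m : ℕ → ℕ) : Prop where
  isRoot : IsRoot gC t δ
  decomp : ∀ H ∈ cspan gC t, δ H = ∑ j ∈ Finset.Icc 1 n, (m j : ℂ) * α j H
  highest : ∀ (b : Module.Dual ℂ gC) (k : ℕ → ℕ), IsRoot gC t b →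
    (∀ H ∈ cspan gC t, b H = ∑ j ∈ Finset.Icc 1 n, (k j : ℂ) * α j H) →
    ∀ j ∈ Finset.Icc 1 n, k j ≤ m j

/-- `expAd X` is the inner automorphism `Ad(exp X) = exp (ad X)` of `gC`:
it multiplies each eigenvector of `ad X` with eigenvalue `c` by `e^c`, it is additive on
commuting arguments, and conjugation by any automorphism transports it naturally. -/
structure IsExpAd (expAd : gC → (gC ≃ₗ⁅ℂ⁆ gC)) : Prop where
  eig : ∀ (X Y : gC) (c : ℂ), ⁅X, Y⁆ = c • Y → expAd X Y = Complex.exp c • Y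
  add : ∀ X Y : gC, ⁅X, Y⁆ = 0 → expAd (X + Y) = expAd X * expAd Y
  conj : ∀ (f : gC ≃ₗ⁅ℂ⁆ gC) (X : gC), f * expAd X * f⁻¹ = expAd (f X)

/-- The group `Int(s)` of inner automorphisms generated by `exp (ad X)`, `X ∈ s`. -/
noncomputable def Inn (expAd : gC → (gC ≃ₗ⁅ℂ⁆ gC)) (s : LieSubalgebra ℝ gC) :
    Subgroup (gC ≃ₗ⁅ℂ⁆ gC) :=
  Subgroup.closure (expAd '' (s : Set gC))

/-- The automorphism `τ_H = Ad(exp π √-1 H)`. -/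
noncomputable def tau (expAd : gC → (gC ≃ₗ⁅ℂ⁆ gC)) (H : gC) : gC ≃ₗ⁅ℂ⁆ gC :=
  expAd (((Real.pi : ℂ) * Complex.I) • H)

/-- The automorphism `Ad(exp (π/2) √-1 H)`. -/
noncomputable def sigmaAd (expAd : gC → (gC ≃ₗ⁅ℂ⁆ gC)) (H : gC) : gC ≃ₗ⁅ℂ⁆ gC :=
  expAd ((((Real.pi / 2 : ℝ) : ℂ) * Complex.I) • H)

/-- The fixed point set `g^f` of an automorphism `f` inside the real form `g`. -/
def FixIn (g : LieSubalgebra ℝ gC) (f : gC ≃ₗ⁅ℂ⁆ gC) : Set gC :=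
  {x : gC | x ∈ g ∧ f x = x}

/-- Root space decomposition: `gC` is spanned by `t_ℂ` together with the root spaces. -/
def SpansByRoots (t : LieSubalgebra ℝ gC) : Prop :=
  Submodule.span ℂ ((cspan gC t : Set gC) ∪
    {X : gC | ∃ a : Module.Dual ℂ gC, IsRoot gC t a ∧ X ∈ rootSpace gC t a}) = ⊤

end Paper

/-!
The centre of `h = g^σ` is `ℝ √-1 K_i`. On a root space `g_b` the automorphism `σ` acts by
`ζ = exp ((π/2) √-1 b(K_i))`, and `|b(K_i)| ≤ m_i = 3`, so `1 + ζ + ζ² + ζ³ = 0` unless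
`b(K_i) = 0`; hence `⁅K_i, Y + σY + σ²Y + σ³Y⁆ = 0` for every `Y`, and `⁅K_i, Y⁆ = 0` when `σY = Y`.
Conversely, an element of `t_C` commuting with `h` commutes with the σ-fixed root vectors of the
simple roots `α_j`, `j ≠ i`, so it is a multiple of `K_i` because `g_C` has trivial centre.

As `τ` preserves `h` and `t`, it follows that `τ K_i = λ K_i`, and `τ² = 1` forces `λ = ±1`.
Then `c_i = δ(τ K_i) = 3λ` and `τ σ τ⁻¹ = Ad(exp (π/2) √-1 τ K_i) = σ^λ`. The two cases exclude
each other since `σ² ≠ 1`: it acts by `-1` on the root space of `δ`.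

Compactness of `g` enters through the conjugation `θ` of `g_C` with respect to `g`: roots are
imaginary on `t` (the Killing form is negative definite), so `θ` maps `g_b` onto `g_{-b}`. This
gives the bound `|b(K_i)| ≤ m_i` for negative roots as well, and shows that `σ` commutes with `θ`,
that is, `σ` preserves `g`.
-/

namespace Paper

theorem mul_ne_inv_mul_of_mul_self_ne_one {G : Type*} [Group G] {σ : G} (hσ : σ * σ ≠ 1)
    (τ : G) : σ * τ ≠ σ⁻¹ * τ :=
  fun h => hσ (mul_eq_one_iff_eq_inv.mpr (mul_right_cancel h))

theorem exp_pi_div_two_mul_I_mul_intCast_pow_four (k : ℤ) :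
    exp (((Real.pi / 2 : ℝ) : ℂ) * I * k) ^ 4 = 1 := by
  rw [← exp_nat_mul, ← exp_int_mul_two_pi_mul_I k]
  push_cast
  ring_nf

theorem exp_pi_div_two_mul_I_mul_intCast_ne_one {k : ℤ} (hk : k ≠ 0) (hk3 : k.natAbs ≤ 3) :
    exp (((Real.pi / 2 : ℝ) : ℂ) * I * k) ≠ 1 := by
  rw [Ne, exp_eq_one_iff]
  rintro ⟨l, hl⟩
  have : (k : ℂ) = ((4 * l : ℤ) : ℂ) := by
    have hπ : (Real.pi : ℂ) * I ≠ 0 := mul_ne_zero (ofReal_ne_zero.mpr Real.pi_ne_zero) I_ne_zero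
    apply mul_left_cancel₀ hπ
    push_cast at hl ⊢
    linear_combination 2 * hl
  have : k = 4 * l := by exact_mod_cast this
  omega

theorem one_add_add_sq_add_pow_three_eq_zero {ζ : ℂ} (h4 : ζ ^ 4 = 1) (h1 : ζ ≠ 1) :
    1 + ζ + ζ ^ 2 + ζ ^ 3 = 0 := by
  have h : (ζ - 1) * (1 + ζ + ζ ^ 2 + ζ ^ 3) = 0 := by linear_combination h4
  exact (mul_eq_zero.mp h).resolve_left (sub_ne_zero.mpr h1)

theorem eq_zero_of_lie_eq_rotation {L : Type*} [LieRing L] [LieAlgebra ℝ L]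
    (hneg : ∀ x : L, x ≠ 0 → killingForm ℝ L x x < 0) {H u v : L} {p q : ℝ} (hp : p ≠ 0)
    (hu : ⁅H, u⁆ = p • u - q • v) (hv : ⁅H, v⁆ = q • u + p • v) : u = 0 ∧ v = 0 := by
  set κ := killingForm ℝ L
  have hinv : ∀ x, κ ⁅H, x⁆ x = 0 := fun x => by
    rw [LieModule.traceForm_apply_lie_apply, lie_self, map_zero]
  have hnonpos : ∀ x, κ x x ≤ 0 := fun x => by
    rcases eq_or_ne x 0 with rfl | hx
    · simp
    · exact (hneg x hx).le
  have h₁ := hinv u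
  have h₂ := hinv v
  simp only [hu, hv, map_add, map_sub, map_smul, LinearMap.add_apply, LinearMap.sub_apply,
    LinearMap.smul_apply, smul_eq_mul] at h₁ h₂
  have hsymm : κ v u = κ u v := LieModule.traceForm_comm ℝ L L v u
  have hsum : κ u u + κ v v = 0 := by
    have h : p * (κ u u + κ v v) = 0 := by linear_combination h₁ + h₂ + q * hsymm
    exact (mul_eq_zero.mp h).resolve_left hp
  constructor <;> by_contra h
  · linarith [hneg u h, hnonpos v]
  · linarith [hneg v h, hnonpos u]

variable {gC : Type} [LieRing gC] [LieAlgebra ℂ gC]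

section ExpAd

variable {expAd : gC → (gC ≃ₗ⁅ℂ⁆ gC)}

theorem IsExpAd.map_zero (hexp : IsExpAd gC expAd) : expAd 0 = 1 := by
  have h := hexp.add 0 0 (lie_zero 0)
  rw [add_zero] at h
  exact mul_eq_left.mp h.symm

theorem IsExpAd.map_neg (hexp : IsExpAd gC expAd) (X : gC) : expAd (-X) = (expAd X)⁻¹ := by
  refine eq_inv_of_mul_eq_one_right ?_
  rw [← hexp.add X (-X) (by rw [lie_neg, lie_self, neg_zero]), add_neg_cancel]
  exact hexp.map_zero

theorem sigmaAd_neg (hexp : IsExpAd gC expAd) (H : gC) :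
    sigmaAd gC expAd (-H) = (sigmaAd gC expAd H)⁻¹ := by
  rw [sigmaAd, sigmaAd, smul_neg, hexp.map_neg]

theorem mul_sigmaAd (hexp : IsExpAd gC expAd) (f : gC ≃ₗ⁅ℂ⁆ gC) (H : gC) :
    f * sigmaAd gC expAd H = sigmaAd gC expAd (f H) * f := by
  rw [← mul_inv_eq_iff_eq_mul, sigmaAd, hexp.conj, map_smul, sigmaAd]

theorem sigmaAd_apply_of_lie_eq_smul (hexp : IsExpAd gC expAd) {H X : gC} {c : ℂ}
    (h : ⁅H, X⁆ = c • X) :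
    sigmaAd gC expAd H X = exp (((Real.pi / 2 : ℝ) : ℂ) * I * c) • X := by
  refine hexp.eig _ _ _ ?_
  rw [smul_lie, h, smul_smul]

end ExpAd

theorem lie_add_I_smul (x y x' y' : gC) :
    ⁅x + I • y, x' + I • y'⁆ = (⁅x, x'⁆ - ⁅y, y'⁆) + I • (⁅x, y'⁆ + ⁅y, x'⁆) := by
  simp only [lie_add, add_lie, lie_smul, smul_lie, smul_add, smul_smul, I_mul_I, neg_one_smul]
  abel

variable [LieAlgebra ℝ gC]

namespace IsCompactForm

variable {g : LieSubalgebra ℝ gC}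

theorem eq_of_add_I_smul_eq (hg : IsCompactForm gC g) {x y x' y' : gC} (hx : x ∈ g)
    (hy : y ∈ g) (hx' : x' ∈ g) (hy' : y' ∈ g) (h : x + I • y = x' + I • y') :
    x = x' ∧ y = y' := by
  have hI : I • (y' - y) = x - x' := by linear_combination (norm := module) -h
  have hy : y' - y = 0 := hg.inj _ (sub_mem hy' hy) (hI ▸ sub_mem hx hx')
  rw [hy, smul_zero, eq_comm, sub_eq_zero] at hI
  exact ⟨hI, (sub_eq_zero.mp hy).symm⟩

noncomputable def conj (hg : IsCompactForm gC g) (z : gC) : gC :=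
  (hg.spans z).choose - I • (hg.spans z).choose_spec.2.choose

theorem conj_add_I_smul (hg : IsCompactForm gC g) {x y : gC} (hx : x ∈ g) (hy : y ∈ g) :
    hg.conj (x + I • y) = x - I • y := by
  have hspec : ∀ z, ∃ x' ∈ g, ∃ y' ∈ g, z = x' + I • y' ∧ hg.conj z = x' - I • y' := fun z =>
    ⟨_, (hg.spans z).choose_spec.1, _, (hg.spans z).choose_spec.2.choose_spec.1,
      (hg.spans z).choose_spec.2.choose_spec.2, rfl⟩
  obtain ⟨x', hx', y', hy', h, hθ⟩ := hspec (x + I • y)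
  obtain ⟨rfl, rfl⟩ := hg.eq_of_add_I_smul_eq hx' hy' hx hy h.symm
  exact hθ

theorem conj_add (hg : IsCompactForm gC g) (z w : gC) :
    hg.conj (z + w) = hg.conj z + hg.conj w := by
  obtain ⟨x, hx, y, hy, rfl⟩ := hg.spans z
  obtain ⟨x', hx', y', hy', rfl⟩ := hg.spans w
  rw [show x + I • y + (x' + I • y') = (x + x') + I • (y + y') by module,
    hg.conj_add_I_smul (add_mem hx hx') (add_mem hy hy'), hg.conj_add_I_smul hx hy,
    hg.conj_add_I_smul hx' hy']
  module

theorem conj_conj (hg : IsCompactForm gC g) (z : gC) : hg.conj (hg.conj z) = z := by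
  obtain ⟨x, hx, y, hy, rfl⟩ := hg.spans z
  rw [hg.conj_add_I_smul hx hy, sub_eq_add_neg, ← smul_neg, hg.conj_add_I_smul hx (neg_mem hy),
    smul_neg, sub_neg_eq_add]

theorem conj_lie (hg : IsCompactForm gC g) (z w : gC) :
    hg.conj ⁅z, w⁆ = ⁅hg.conj z, hg.conj w⁆ := by
  obtain ⟨x, hx, y, hy, rfl⟩ := hg.spans z
  obtain ⟨x', hx', y', hy', rfl⟩ := hg.spans w
  have hθ : ∀ {u v : gC}, u ∈ g → v ∈ g → hg.conj (u + I • v) = u + I • -v := fun hu hv => by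
    rw [hg.conj_add_I_smul hu hv, smul_neg, sub_eq_add_neg]
  rw [lie_add_I_smul, hθ (sub_mem (g.lie_mem hx hx') (g.lie_mem hy hy'))
    (add_mem (g.lie_mem hx hy') (g.lie_mem hy hx')), hθ hx hy, hθ hx' hy', lie_add_I_smul]
  simp only [lie_neg, neg_lie, neg_neg, neg_add, sub_eq_add_neg]

theorem conj_eq_self_iff (hg : IsCompactForm gC g) {z : gC} : hg.conj z = z ↔ z ∈ g := by
  refine ⟨fun h => ?_, fun hz => by simpa using hg.conj_add_I_smul hz g.zero_mem⟩
  obtain ⟨x, hx, y, hy, rfl⟩ := hg.spans z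
  rw [hg.conj_add_I_smul hx hy, sub_eq_add_neg, ← smul_neg] at h
  obtain ⟨-, hy'⟩ := hg.eq_of_add_I_smul_eq hx (neg_mem hy) hx hy h
  have hy0 : y = 0 := by
    have h2 : (2 : ℂ) • y = 0 := by linear_combination (norm := module) -hy'
    exact (smul_eq_zero.mp h2).resolve_left two_ne_zero
  simpa [hy0] using hx

theorem apply_eq_of_apply_add_I_smul_eq (hg : IsCompactForm gC g) {f : gC ≃ₗ⁅ℂ⁆ gC}
    (hf : ∀ x ∈ g, f x ∈ g) {u v : gC} (hu : u ∈ g) (hv : v ∈ g)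
    (h : f (u + I • v) = u + I • v) : f u = u ∧ f v = v :=
  hg.eq_of_add_I_smul_eq (hf u hu) (hf v hv) hu hv (by rwa [map_add, map_smul] at h)

end IsCompactForm

variable {t : LieSubalgebra ℝ gC}

theorem cspan_lie_eq_zero (hab : ∀ x ∈ t, ∀ y ∈ t, ⁅x, y⁆ = (0 : gC)) {H H' : gC}
    (hH : H ∈ cspan gC t) (hH' : H' ∈ cspan gC t) : ⁅H, H'⁆ = 0 := by
  induction hH using Submodule.span_induction with
  | mem x hx =>
    induction hH' using Submodule.span_induction with
    | mem y hy => exact hab x hx y hy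
    | zero => exact lie_zero x
    | add _ _ _ _ h₁ h₂ => rw [lie_add, h₁, h₂, add_zero]
    | smul c _ _ h => rw [lie_smul, h, smul_zero]
  | zero => exact zero_lie H'
  | add _ _ _ _ h₁ h₂ => rw [add_lie, h₁, h₂, add_zero]
  | smul c _ _ h => rw [smul_lie, h, smul_zero]

theorem map_mem_cspan (f : gC ≃ₗ⁅ℂ⁆ gC) (hft : (⇑f) '' (t : Set gC) = (t : Set gC)) {z : gC}
    (hz : z ∈ cspan gC t) : f z ∈ cspan gC t := by
  have h : (cspan gC t).map (f : gC →ₗ[ℂ] gC) = cspan gC t := by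
    rw [cspan, Submodule.map_span]
    exact congrArg _ hft
  exact h ▸ Submodule.mem_map_of_mem hz

theorem SpansByRoots.induction_on (hspan : SpansByRoots gC t) {p : gC → Prop} (z : gC)
    (cspan : ∀ x ∈ cspan gC t, p x) (root : ∀ b, IsRoot gC t b → ∀ x ∈ rootSpace gC t b, p x)
    (add : ∀ x y, p x → p y → p (x + y)) (smul : ∀ (c : ℂ) x, p x → p (c • x)) : p z := by
  have hz : z ∈ (⊤ : Submodule ℂ gC) := trivial
  rw [← hspan] at hz
  induction hz using Submodule.span_induction with
  | mem x hx => exact hx.elim (cspan x) fun ⟨b, hb, hx⟩ => root b hb x hx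
  | zero => exact cspan 0 (zero_mem _)
  | add x y _ _ hx hy => exact add x y hx hy
  | smul c x _ hx => exact smul c x hx

theorem eq_zero_of_forall_root_apply_eq_zero [LieAlgebra.IsSimple ℂ gC]
    (hspan : SpansByRoots gC t) (hab : ∀ x ∈ t, ∀ y ∈ t, ⁅x, y⁆ = (0 : gC)) {H : gC}
    (hH : H ∈ cspan gC t) (h : ∀ b, IsRoot gC t b → b H = 0) : H = 0 := by
  have hcen : H ∈ LieAlgebra.center ℂ gC := by
    rw [LieAlgebra.center, LieModule.mem_maxTrivSubmodule]
    intro z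
    rw [← lie_skew, neg_eq_zero]
    induction z using hspan.induction_on with
    | cspan x hx => exact cspan_lie_eq_zero hab hH hx
    | root b hb x hx => rw [hx H hH, h b hb, zero_smul]
    | add x y hx hy => rw [lie_add, hx, hy, add_zero]
    | smul c x hx => rw [lie_smul, hx, smul_zero]
  simpa [LieAlgebra.center_eq_bot] using hcen

section SigmaAd

variable {expAd : gC → (gC ≃ₗ⁅ℂ⁆ gC)}

theorem sigmaAd_apply_of_mem_cspan (hexp : IsExpAd gC expAd)
    (hab : ∀ x ∈ t, ∀ y ∈ t, ⁅x, y⁆ = (0 : gC)) {H x : gC} (hH : H ∈ cspan gC t)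
    (hx : x ∈ cspan gC t) : sigmaAd gC expAd H x = x := by
  have h : ⁅H, x⁆ = (0 : ℂ) • x := by rw [cspan_lie_eq_zero hab hH hx, zero_smul]
  rw [sigmaAd_apply_of_lie_eq_smul hexp h, mul_zero, exp_zero, one_smul]

theorem lie_add_sigmaAd_eq_zero (hexp : IsExpAd gC expAd)
    (hab : ∀ x ∈ t, ∀ y ∈ t, ⁅x, y⁆ = (0 : gC)) (hspan : SpansByRoots gC t) {H : gC}
    (hH : H ∈ cspan gC t) (hroots : ∀ b, IsRoot gC t b → ∃ k : ℤ, b H = k ∧ k.natAbs ≤ 3)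
    (z : gC) :
    ⁅H, z + sigmaAd gC expAd H z + sigmaAd gC expAd H (sigmaAd gC expAd H z) +
      sigmaAd gC expAd H (sigmaAd gC expAd H (sigmaAd gC expAd H z))⁆ = 0 := by
  set σ := sigmaAd gC expAd H
  induction z using hspan.induction_on with
  | cspan x hx =>
    simp only [σ, sigmaAd_apply_of_mem_cspan hexp hab hH hx, lie_add, cspan_lie_eq_zero hab hH hx,
      add_zero]
  | root b hb x hx =>
    obtain ⟨k, hbk, hk⟩ := hroots b hb
    set ζ := exp (((Real.pi / 2 : ℝ) : ℂ) * I * k)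
    have hσx : σ x = ζ • x := by rw [sigmaAd_apply_of_lie_eq_smul hexp (hx H hH), hbk]
    have hsum : x + σ x + σ (σ x) + σ (σ (σ x)) = (1 + ζ + ζ ^ 2 + ζ ^ 3) • x := by
      simp only [hσx, map_smul]
      module
    rw [hsum, lie_smul, hx H hH, hbk, smul_smul]
    rcases eq_or_ne k 0 with rfl | hk0
    · simp
    · rw [one_add_add_sq_add_pow_three_eq_zero (exp_pi_div_two_mul_I_mul_intCast_pow_four k)
        (exp_pi_div_two_mul_I_mul_intCast_ne_one hk0 hk), zero_mul, zero_smul]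
  | add x y hx hy =>
    simp only [map_add, lie_add] at hx hy ⊢
    linear_combination (norm := module) hx + hy
  | smul c x hx =>
    simp only [map_smul, ← smul_add, lie_smul, hx, smul_zero]

theorem lie_eq_zero_of_sigmaAd_apply_eq (hexp : IsExpAd gC expAd)
    (hab : ∀ x ∈ t, ∀ y ∈ t, ⁅x, y⁆ = (0 : gC)) (hspan : SpansByRoots gC t) {H : gC}
    (hH : H ∈ cspan gC t) (hroots : ∀ b, IsRoot gC t b → ∃ k : ℤ, b H = k ∧ k.natAbs ≤ 3)
    {Y : gC} (hY : sigmaAd gC expAd H Y = Y) : ⁅H, Y⁆ = 0 := by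
  have h := lie_add_sigmaAd_eq_zero hexp hab hspan hH hroots Y
  rw [hY, hY, hY, show Y + Y + Y + Y = (4 : ℂ) • Y by module, lie_smul] at h
  exact (smul_eq_zero.mp h).resolve_left (by norm_num)

end SigmaAd

theorem IsSimpleSystem.eq_zero_of_forall_apply_eq_zero [LieAlgebra.IsSimple ℂ gC]
    (hspan : SpansByRoots gC t) (hab : ∀ x ∈ t, ∀ y ∈ t, ⁅x, y⁆ = (0 : gC)) {n : ℕ}
    {α : ℕ → Module.Dual ℂ gC} {K : ℕ → gC} (hsys : IsSimpleSystem gC t n α K) {H : gC}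
    (hH : H ∈ cspan gC t) (h : ∀ j ∈ Finset.Icc 1 n, α j H = 0) : H = 0 := by
  refine eq_zero_of_forall_root_apply_eq_zero hspan hab hH fun b hb => ?_
  have hsum : ∀ k : ℕ → ℕ, ∑ j ∈ Finset.Icc 1 n, (k j : ℂ) * α j H = 0 := fun k =>
    Finset.sum_eq_zero fun j hj => by rw [h j hj, mul_zero]
  rcases hsys.decomp b hb with ⟨k, hk⟩ | ⟨k, hk⟩ <;> simp [hk H hH, hsum]

theorem IsSimpleSystem.sum_mul_apply_K {n : ℕ} {α : ℕ → Module.Dual ℂ gC} {K : ℕ → gC}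
    (hsys : IsSimpleSystem gC t n α K) {i : ℕ} (hi : i ∈ Finset.Icc 1 n) (f : ℕ → ℂ) :
    ∑ j ∈ Finset.Icc 1 n, f j * α j (K i) = f i := by
  rw [Finset.sum_eq_single_of_mem i hi fun j hj hji => by
    rw [hsys.K_dual j hj i hi, if_neg hji, mul_zero]]
  rw [hsys.K_dual i hi i hi, if_pos rfl, mul_one]

theorem IsSimpleSystem.K_ne_zero {n : ℕ} {α : ℕ → Module.Dual ℂ gC} {K : ℕ → gC}
    (hsys : IsSimpleSystem gC t n α K) {i : ℕ} (hi : i ∈ Finset.Icc 1 n) : K i ≠ 0 := by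
  intro h
  simpa [h] using hsys.K_dual i hi i hi

theorem sigmaAd_mul_self_ne_one {expAd : gC → (gC ≃ₗ⁅ℂ⁆ gC)} (hexp : IsExpAd gC expAd)
    {H : gC} (hH : H ∈ cspan gC t) {b : Module.Dual ℂ gC} (hb : IsRoot gC t b) (h3 : b H = 3) :
    sigmaAd gC expAd H * sigmaAd gC expAd H ≠ 1 := by
  obtain ⟨-, X, hX0, hX⟩ := hb
  have hσX := sigmaAd_apply_of_lie_eq_smul hexp (hX H hH)
  have hexp3 : exp (((Real.pi / 2 : ℝ) : ℂ) * I * b H) * exp (((Real.pi / 2 : ℝ) : ℂ) * I * b H)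
      = -1 := by
    rw [← exp_add, h3, show ((Real.pi / 2 : ℝ) : ℂ) * I * 3 + ((Real.pi / 2 : ℝ) : ℂ) * I * 3
      = Real.pi * I + (1 : ℤ) * (2 * Real.pi * I) by push_cast; ring,
      exp_add, exp_pi_mul_I, exp_int_mul_two_pi_mul_I, mul_one]
  intro h
  have hσσX : sigmaAd gC expAd H (sigmaAd gC expAd H X) = X := DFunLike.congr_fun h X
  rw [hσX, map_smul, hσX, smul_smul, hexp3, neg_one_smul, neg_eq_iff_add_eq_zero, ← two_smul ℂ,
    smul_eq_zero] at hσσX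
  exact hX0 (hσσX.resolve_left two_ne_zero)

variable [IsScalarTower ℝ ℂ gC]

theorem ofReal_smul_eq_smul (r : ℝ) (x : gC) : (r : ℂ) • x = r • x := by
  rw [← algebraMap_smul ℂ r x]
  rfl

theorem smul_add_I_smul (c : ℂ) (x y : gC) :
    c • (x + I • y) = (c.re • x - c.im • y) + I • (c.im • x + c.re • y) := by
  simp only [← ofReal_smul_eq_smul]
  conv_lhs => rw [← re_add_im c]
  match_scalars
  · ring
  · linear_combination (c.im : ℂ) * I_mul_I

theorem exists_eq_add_I_smul_of_mem_cspan {z : gC} (hz : z ∈ cspan gC t) :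
    ∃ x ∈ t, ∃ y ∈ t, z = x + I • y := by
  induction hz using Submodule.span_induction with
  | mem x hx => exact ⟨x, hx, 0, zero_mem _, by rw [smul_zero, add_zero]⟩
  | zero => exact ⟨0, zero_mem _, 0, zero_mem _, by rw [smul_zero, add_zero]⟩
  | add _ _ _ _ h₁ h₂ =>
    obtain ⟨x, hx, y, hy, rfl⟩ := h₁
    obtain ⟨x', hx', y', hy', rfl⟩ := h₂
    exact ⟨x + x', add_mem hx hx', y + y', add_mem hy hy', by module⟩
  | smul c _ _ h =>
    obtain ⟨x, hx, y, hy, rfl⟩ := h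
    exact ⟨_, sub_mem (t.smul_mem c.re hx) (t.smul_mem c.im hy),
      _, add_mem (t.smul_mem c.im hx) (t.smul_mem c.re hy), smul_add_I_smul c x y⟩

namespace IsCompactForm

variable {g : LieSubalgebra ℝ gC}

theorem conj_smul (hg : IsCompactForm gC g) (c : ℂ) (z : gC) :
    hg.conj (c • z) = starRingEnd ℂ c • hg.conj z := by
  obtain ⟨x, hx, y, hy, rfl⟩ := hg.spans z
  rw [smul_add_I_smul, hg.conj_add_I_smul (sub_mem (g.smul_mem _ hx) (g.smul_mem _ hy))
    (add_mem (g.smul_mem _ hx) (g.smul_mem _ hy)), hg.conj_add_I_smul hx hy]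
  simp only [← ofReal_smul_eq_smul]
  conv_rhs => rw [← re_add_im c]
  simp only [map_add, map_mul, conj_ofReal, conj_I]
  match_scalars
  · ring
  · linear_combination -(c.im : ℂ) * I_mul_I

theorem conj_mem_cspan (hg : IsCompactForm gC g) (hle : t ≤ g) {z : gC}
    (hz : z ∈ cspan gC t) : hg.conj z ∈ cspan gC t := by
  obtain ⟨x, hx, y, hy, rfl⟩ := exists_eq_add_I_smul_of_mem_cspan hz
  rw [hg.conj_add_I_smul (hle hx) (hle hy)]
  exact sub_mem (Submodule.subset_span hx) (Submodule.smul_mem _ _ (Submodule.subset_span hy))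

theorem re_root_apply_eq_zero (hg : IsCompactForm gC g) (hle : t ≤ g) {b : Module.Dual ℂ gC}
    (hb : IsRoot gC t b) {H : gC} (hH : H ∈ t) : (b H).re = 0 := by
  by_contra hp
  obtain ⟨-, X, hX0, hX⟩ := hb
  obtain ⟨u, hu, v, hv, rfl⟩ := hg.spans X
  have hHX := hX H (Submodule.subset_span hH)
  rw [lie_add, lie_smul, smul_add_I_smul] at hHX
  obtain ⟨hHu, hHv⟩ := hg.eq_of_add_I_smul_eq (g.lie_mem (hle hH) hu) (g.lie_mem (hle hH) hv)
    (sub_mem (g.smul_mem _ hu) (g.smul_mem _ hv)) (add_mem (g.smul_mem _ hu) (g.smul_mem _ hv))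
    hHX
  obtain ⟨hu0, hv0⟩ := eq_zero_of_lie_eq_rotation hg.negdef (H := ⟨H, hle hH⟩) (u := ⟨u, hu⟩)
    (v := ⟨v, hv⟩) hp (Subtype.ext hHu) (Subtype.ext hHv)
  apply hX0
  rw [show u = 0 from congrArg Subtype.val hu0, show v = 0 from congrArg Subtype.val hv0,
    smul_zero, add_zero]

theorem root_apply_conj (hg : IsCompactForm gC g) (hle : t ≤ g) {b : Module.Dual ℂ gC}
    (hb : IsRoot gC t b) {H : gC} (hH : H ∈ cspan gC t) :
    b (hg.conj H) = -starRingEnd ℂ (b H) := by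
  obtain ⟨x, hx, y, hy, rfl⟩ := exists_eq_add_I_smul_of_mem_cspan hH
  have hbx := hg.re_root_apply_eq_zero hle hb hx
  have hby := hg.re_root_apply_eq_zero hle hb hy
  rw [hg.conj_add_I_smul (hle hx) (hle hy)]
  apply Complex.ext <;> simp [hbx, hby]

theorem conj_mem_rootSpace (hg : IsCompactForm gC g) (hle : t ≤ g) {b : Module.Dual ℂ gC}
    (hb : IsRoot gC t b) {X : gC} (hX : X ∈ rootSpace gC t b) :
    hg.conj X ∈ rootSpace gC t (-b) := by
  intro H hH
  conv_lhs => rw [← hg.conj_conj H]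
  rw [← hg.conj_lie, hX _ (hg.conj_mem_cspan hle hH), hg.conj_smul, hg.root_apply_conj hle hb hH,
    map_neg, Complex.conj_conj, LinearMap.neg_apply]

theorem isRoot_neg (hg : IsCompactForm gC g) (hle : t ≤ g) {b : Module.Dual ℂ gC}
    (hb : IsRoot gC t b) : IsRoot gC t (-b) := by
  obtain ⟨H, hH, hbH⟩ := hb.1
  obtain ⟨X, hX0, hX⟩ := hb.2
  refine ⟨⟨H, hH, by simpa using hbH⟩, hg.conj X, fun h => hX0 ?_, hg.conj_mem_rootSpace hle hb hX⟩
  rw [← hg.conj_conj X, h, hg.conj_eq_self_iff.mpr g.zero_mem]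

end IsCompactForm

theorem IsHighestRoot.exists_root_apply_K_eq_intCast {g : LieSubalgebra ℝ gC}
    (hg : IsCompactForm gC g) (hle : t ≤ g) {n : ℕ} {α : ℕ → Module.Dual ℂ gC} {K : ℕ → gC}
    (hsys : IsSimpleSystem gC t n α K) {δ : Module.Dual ℂ gC} {m : ℕ → ℕ}
    (hδ : IsHighestRoot gC t n α δ m) {i : ℕ} (hi : i ∈ Finset.Icc 1 n)
    {b : Module.Dual ℂ gC} (hb : IsRoot gC t b) : ∃ k : ℤ, b (K i) = k ∧ k.natAbs ≤ m i := by
  have hKi := hsys.K_mem i hi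
  rcases hsys.decomp b hb with ⟨k, hk⟩ | ⟨k, hk⟩
  · refine ⟨k i, ?_, by simpa using hδ.highest b k hb hk i hi⟩
    rw [hk _ hKi, hsys.sum_mul_apply_K hi]
    rfl
  · have hk' : ∀ H ∈ cspan gC t, (-b) H = ∑ j ∈ Finset.Icc 1 n, (k j : ℂ) * α j H :=
      fun H hH => by rw [LinearMap.neg_apply, hk H hH, neg_neg]
    refine ⟨-(k i : ℤ), ?_, by simpa using hδ.highest _ k (hg.isRoot_neg hle hb) hk' i hi⟩
    rw [hk _ hKi, hsys.sum_mul_apply_K hi]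
    push_cast
    rfl

section SigmaAd

variable {g : LieSubalgebra ℝ gC} {expAd : gC → (gC ≃ₗ⁅ℂ⁆ gC)}

theorem IsCompactForm.conj_sigmaAd_conj (hg : IsCompactForm gC g) (hle : t ≤ g)
    (hab : ∀ x ∈ t, ∀ y ∈ t, ⁅x, y⁆ = (0 : gC)) (hexp : IsExpAd gC expAd)
    (hspan : SpansByRoots gC t) {H : gC} (hH : H ∈ cspan gC t)
    (hroots : ∀ b, IsRoot gC t b → ∃ k : ℤ, b H = k) (z : gC) :
    hg.conj (sigmaAd gC expAd H (hg.conj z)) = sigmaAd gC expAd H z := by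
  induction z using hspan.induction_on with
  | cspan x hx =>
    rw [sigmaAd_apply_of_mem_cspan hexp hab hH (hg.conj_mem_cspan hle hx), hg.conj_conj,
      sigmaAd_apply_of_mem_cspan hexp hab hH hx]
  | root b hb x hx =>
    obtain ⟨k, hk⟩ := hroots b hb
    rw [sigmaAd_apply_of_lie_eq_smul hexp (hg.conj_mem_rootSpace hle hb hx H hH), hg.conj_smul,
      hg.conj_conj, sigmaAd_apply_of_lie_eq_smul hexp (hx H hH), ← exp_conj]
    simp [hk, map_ofNat]
  | add x y hx hy => rw [hg.conj_add, map_add, hg.conj_add, hx, hy, map_add]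
  | smul c x hx => rw [hg.conj_smul, map_smul, hg.conj_smul, Complex.conj_conj, hx, map_smul]

theorem IsCompactForm.sigmaAd_mem (hg : IsCompactForm gC g) (hle : t ≤ g)
    (hab : ∀ x ∈ t, ∀ y ∈ t, ⁅x, y⁆ = (0 : gC)) (hexp : IsExpAd gC expAd)
    (hspan : SpansByRoots gC t) {H : gC} (hH : H ∈ cspan gC t)
    (hroots : ∀ b, IsRoot gC t b → ∃ k : ℤ, b H = k) {x : gC} (hx : x ∈ g) :
    sigmaAd gC expAd H x ∈ g := by
  have h := hg.conj_sigmaAd_conj hle hab hexp hspan hH hroots x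
  rw [hg.conj_eq_self_iff.mpr hx] at h
  exact hg.conj_eq_self_iff.mp h

end SigmaAd

section Involution

variable [LieAlgebra.IsSimple ℂ gC] {g : LieSubalgebra ℝ gC} {expAd : gC → (gC ≃ₗ⁅ℂ⁆ gC)}
  {n : ℕ} {α : ℕ → Module.Dual ℂ gC} {K : ℕ → gC} {δ : Module.Dual ℂ gC} {m : ℕ → ℕ} {i : ℕ}

theorem eq_smul_K_of_forall_lie_eq_zero (hg : IsCompactForm gC g) (hle : t ≤ g)
    (hab : ∀ x ∈ t, ∀ y ∈ t, ⁅x, y⁆ = (0 : gC)) (hexp : IsExpAd gC expAd)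
    (hspan : SpansByRoots gC t) (hsys : IsSimpleSystem gC t n α K)
    (hδ : IsHighestRoot gC t n α δ m) (hi : i ∈ Finset.Icc 1 n) {X : gC}
    (hX : X ∈ cspan gC t) (hcomm : ∀ Y ∈ FixIn gC g (sigmaAd gC expAd (K i)), ⁅X, Y⁆ = 0) :
    X = α i X • K i := by
  have hKi := hsys.K_mem i hi
  have hσg : ∀ x ∈ g, sigmaAd gC expAd (K i) x ∈ g := fun x hx =>
    hg.sigmaAd_mem hle hab hexp hspan hKi (fun b hb =>
      (hδ.exists_root_apply_K_eq_intCast hg hle hsys hi hb).imp fun _ hk => hk.1) hx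
  have hα : ∀ j ∈ Finset.Icc 1 n, j ≠ i → α j X = 0 := by
    intro j hj hji
    obtain ⟨-, E, hE0, hE⟩ := hsys.isRoot j hj
    have hσE : sigmaAd gC expAd (K i) E = E := by
      rw [sigmaAd_apply_of_lie_eq_smul hexp (hE _ hKi), hsys.K_dual j hj i hi, if_neg hji,
        mul_zero, exp_zero, one_smul]
    obtain ⟨u, hu, v, hv, rfl⟩ := hg.spans E
    obtain ⟨hσu, hσv⟩ := hg.apply_eq_of_apply_add_I_smul_eq hσg hu hv hσE
    have h := hE X hX
    rw [lie_add, lie_smul, hcomm u ⟨hu, hσu⟩, hcomm v ⟨hv, hσv⟩, smul_zero, add_zero,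
      eq_comm, smul_eq_zero] at h
    exact h.resolve_right hE0
  rw [← sub_eq_zero]
  refine hsys.eq_zero_of_forall_apply_eq_zero hspan hab (sub_mem hX (Submodule.smul_mem _ _ hKi))
    fun j hj => ?_
  rw [map_sub, map_smul, hsys.K_dual j hj i hi, smul_eq_mul]
  by_cases hji : j = i
  · rw [hji, if_pos rfl, mul_one, sub_self]
  · rw [if_neg hji, mul_zero, sub_zero, hα j hj hji]

theorem apply_K_eq_or_eq_neg (hg : IsCompactForm gC g) (hle : t ≤ g)
    (hab : ∀ x ∈ t, ∀ y ∈ t, ⁅x, y⁆ = (0 : gC)) (hexp : IsExpAd gC expAd)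
    (hspan : SpansByRoots gC t) (hsys : IsSimpleSystem gC t n α K)
    (hδ : IsHighestRoot gC t n α δ m) (hi : i ∈ Finset.Icc 1 n) (hmi : m i = 3)
    {τ : gC ≃ₗ⁅ℂ⁆ gC} (hτ2 : τ * τ = 1) (hτt : (⇑τ) '' (t : Set gC) = (t : Set gC))
    (hτh : (⇑τ) '' FixIn gC g (sigmaAd gC expAd (K i)) = FixIn gC g (sigmaAd gC expAd (K i))) :
    τ (K i) = K i ∨ τ (K i) = -K i := by
  have hKi := hsys.K_mem i hi
  have hK : ∀ Y ∈ FixIn gC g (sigmaAd gC expAd (K i)), ⁅K i, Y⁆ = 0 := fun Y hY =>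
    lie_eq_zero_of_sigmaAd_apply_eq hexp hab hspan hKi
      (fun b hb => hmi ▸ hδ.exists_root_apply_K_eq_intCast hg hle hsys hi hb) hY.2
  have hτK : τ (K i) = α i (τ (K i)) • K i := by
    refine eq_smul_K_of_forall_lie_eq_zero hg hle hab hexp hspan hsys hδ hi
      (map_mem_cspan τ hτt hKi) fun Y hY => ?_
    obtain ⟨Y₀, hY₀, rfl⟩ := hτh.symm ▸ hY
    rw [← LieEquiv.map_lie, hK Y₀ hY₀, map_zero]
  set s := α i (τ (K i))
  have hs : s * s = 1 := by
    have h : (s * s) • K i = (1 : ℂ) • K i := by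
      rw [one_smul, mul_smul, ← hτK, ← map_smul, ← hτK]
      exact DFunLike.congr_fun hτ2 (K i)
    exact smul_left_injective ℂ (hsys.K_ne_zero hi) h
  rcases mul_self_eq_one_iff.mp hs with h | h
  · exact Or.inl (by rw [hτK, h, one_smul])
  · exact Or.inr (by rw [hτK, h, neg_one_smul])

end Involution

theorem stmt_8_general
    (gC : Type) [LieRing gC] [LieAlgebra ℂ gC] [LieAlgebra ℝ gC]
    [IsScalarTower ℝ ℂ gC]
    [LieAlgebra.IsSimple ℂ gC]
    (g t : LieSubalgebra ℝ gC)
    (hg : IsCompactForm gC g) (ht : IsMaxAbelian gC g t)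
    (expAd : gC → (gC ≃ₗ⁅ℂ⁆ gC)) (hexp : IsExpAd gC expAd)
    (hspan : SpansByRoots gC t)
    (n : ℕ) (α : ℕ → Module.Dual ℂ gC) (K : ℕ → gC)
    (hsys : IsSimpleSystem gC t n α K)
    (δ : Module.Dual ℂ gC) (m : ℕ → ℕ) (hδ : IsHighestRoot gC t n α δ m)
    (i : ℕ) (hi : i ∈ Finset.Icc 1 n) (hmi : m i = 3)
    (τ : gC ≃ₗ⁅ℂ⁆ gC) (hτ2 : τ * τ = 1)
    (hτt : (⇑τ) '' (t : Set gC) = (t : Set gC))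
    (hτh : (⇑τ) '' FixIn gC g (sigmaAd gC expAd (K i)) = FixIn gC g (sigmaAd gC expAd (K i)))
    (c : ℕ → ℤ)
    (hc : ∀ H ∈ cspan gC t, δ (τ⁻¹ H) = ∑ j ∈ Finset.Icc 1 n, (c j : ℂ) * α j H) :
    (τ * sigmaAd gC expAd (K i) = sigmaAd gC expAd (K i) * τ ↔ c i = 3) ∧
    (τ * sigmaAd gC expAd (K i) = (sigmaAd gC expAd (K i))⁻¹ * τ ↔ c i = -3) := by
  set σ := sigmaAd gC expAd (K i)
  have hKi := hsys.K_mem i hi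
  have hδK : δ (K i) = 3 := by
    rw [hδ.decomp _ hKi, hsys.sum_mul_apply_K hi, hmi]
    norm_num
  have hσσ : σ * σ ≠ 1 := sigmaAd_mul_self_ne_one hexp hKi hδ.isRoot hδK
  have hcK : (c i : ℂ) = δ (τ (K i)) := by
    rw [← inv_eq_of_mul_eq_one_right hτ2, hc _ hKi, hsys.sum_mul_apply_K hi]
  rcases apply_K_eq_or_eq_neg hg ht.le ht.abelian hexp hspan hsys hδ hi hmi hτ2 hτt hτh
    with hτK | hτK
  · have hcomm : τ * σ = σ * τ := by rw [mul_sigmaAd hexp, hτK]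
    have hci : c i = 3 := by exact_mod_cast (hcK.trans (by rw [hτK, hδK]) : (c i : ℂ) = 3)
    exact ⟨iff_of_true hcomm hci, iff_of_false
      (fun h => mul_ne_inv_mul_of_mul_self_ne_one hσσ τ (hcomm.symm.trans h)) (by omega)⟩
  · have hanti : τ * σ = σ⁻¹ * τ := by rw [mul_sigmaAd hexp, hτK, sigmaAd_neg hexp]
    have hci : c i = -3 := by
      exact_mod_cast (hcK.trans (by rw [hτK, map_neg, hδK]) : (c i : ℂ) = -3)
    exact ⟨iff_of_false
      (fun h => mul_ne_inv_mul_of_mul_self_ne_one hσσ τ (h.symm.trans hanti)) (by omega),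
      iff_of_true hanti hci⟩

/-- Lemma 3.2.  Let `g` be a compact simple Lie algebra, `t` a maximal
abelian subalgebra, `δ = Σ m_j α_j` the highest root, `σ = Ad(exp (π/2) √-1 K i)` with
`m i = 3`, and `h := g^σ`.  Let `τ` be an involutive automorphism of `g` with `τ(h) = h`
and `τ(t) = t`, and write `τ(δ) = Σ c_j α_j` (where `τ(δ)(H) = δ(τ⁻¹ H)`).  Then
(i) `τ ∘ σ = σ ∘ τ` iff `c i = 3`, and (ii) `τ ∘ σ = σ⁻¹ ∘ τ` iff `c i = -3`. -/
theorem stmt_8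
    (gC : Type) [LieRing gC] [LieAlgebra ℂ gC] [LieAlgebra ℝ gC]
    [IsScalarTower ℝ ℂ gC] [FiniteDimensional ℂ gC]
    [LieAlgebra.IsSimple ℂ gC]
    (g t : LieSubalgebra ℝ gC)
    (hg : IsCompactForm gC g) (ht : IsMaxAbelian gC g t)
    (expAd : gC → (gC ≃ₗ⁅ℂ⁆ gC)) (hexp : IsExpAd gC expAd)
    (hspan : SpansByRoots gC t)
    (n : ℕ) (α : ℕ → Module.Dual ℂ gC) (K : ℕ → gC)
    (hsys : IsSimpleSystem gC t n α K)
    (δ : Module.Dual ℂ gC) (m : ℕ → ℕ) (hδ : IsHighestRoot gC t n α δ m)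
    (i : ℕ) (hi : i ∈ Finset.Icc 1 n) (hmi : m i = 3)
    (τ : gC ≃ₗ⁅ℂ⁆ gC) (hτ2 : τ * τ = 1)
    (hτg : (⇑τ) '' (g : Set gC) = (g : Set gC))
    (hτt : (⇑τ) '' (t : Set gC) = (t : Set gC))
    (hτh : (⇑τ) '' FixIn gC g (sigmaAd gC expAd (K i)) = FixIn gC g (sigmaAd gC expAd (K i)))
    (c : ℕ → ℤ)
    (hc : ∀ H ∈ cspan gC t, δ (τ⁻¹ H) = ∑ j ∈ Finset.Icc 1 n, (c j : ℂ) * α j H) :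
    (τ * sigmaAd gC expAd (K i) = sigmaAd gC expAd (K i) * τ ↔ c i = 3) ∧
    (τ * sigmaAd gC expAd (K i) = (sigmaAd gC expAd (K i))⁻¹ * τ ↔ c i = -3) :=
  stmt_8_general gC g t hg ht expAd hexp hspan n α K hsys δ m hδ i hi hmi τ hτ2 hτt hτh c hc

end Paper
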